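/- arXiv:1007.1334 — 5 statements merged into one kernel-verified Lean document; each statement's English description precedes it below -/
import Mathlib

section
/- Let Z₀ ∈ H^1((ω*,ω^*),ℂ) and z₀ ∈ H^1((ω*,ω^*),ℝ) satisfy |Z₀(ω)|^2 + z₀(ω)^2 = 1 for all ω, and suppose ∫ [ Z₀'̄ (Z₀' z₀ − Z₀ z₀') − G |Z₀|^2 ] dω = 0. If moreover ‖1+z₀‖_{L^∞} + C‖z₀'‖_{L^2} < 1, where C is a constant for which ‖Z₀‖_{L^∞} ≤ C(∫ |Z₀'|^2 + G|Z₀|^2)^{1/2}, then Z₀ = 0, i.e. z₀ ≡ −1. -/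
open MeasureTheory Set Complex

private lemma aux_abs_le {a b : ℝ} (hb : 0 ≤ b) (h : a ^ 2 ≤ b ^ 2) : |a| ≤ b := by
  rw [← Real.sqrt_sq_eq_abs, ← Real.sqrt_sq hb]
  exact Real.sqrt_le_sqrt h

set_option maxHeartbeats 2000000 in
/-- Local description of the invariant set: under the smallness condition, `Z₀ = 0`, `z₀ ≡ -1`. -/
theorem stmt4 (ω₀ ω₁ G : ℝ) (hω : ω₀ < ω₁) (hG : 0 < G)
    (Z₀ Z₀' : ℝ → ℂ) (z₀ z₀' : ℝ → ℝ)
    (hZder : ∀ ω ∈ Set.Ioo ω₀ ω₁, HasDerivAt Z₀ (Z₀' ω) ω)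
    (hzder : ∀ ω ∈ Set.Ioo ω₀ ω₁, HasDerivAt z₀ (z₀' ω) ω)
    (hsphere : ∀ ω ∈ Set.Ioo ω₀ ω₁, ‖Z₀ ω‖ ^ 2 + (z₀ ω) ^ 2 = 1)
    (hint : ∫ ω in Set.Ioo ω₀ ω₁,
        ((starRingEnd ℂ) (Z₀' ω) * (Z₀' ω * (z₀ ω : ℂ) - Z₀ ω * (z₀' ω : ℂ))
          - (G : ℂ) * ((‖Z₀ ω‖ : ℂ)) ^ 2) = 0)
    (C : ℝ) (hC : 0 < C)
    (hembed : ∀ ω ∈ Set.Ioo ω₀ ω₁,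
      ‖Z₀ ω‖ ≤ C * Real.sqrt (∫ x in Set.Ioo ω₀ ω₁, (‖Z₀' x‖ ^ 2 + G * ‖Z₀ x‖ ^ 2)))
    (K : ℝ) (hK : ∀ ω ∈ Set.Ioo ω₀ ω₁, |1 + z₀ ω| ≤ K)
    (hsmall : K + C * Real.sqrt (∫ x in Set.Ioo ω₀ ω₁, (z₀' x) ^ 2) < 1) :
    ∀ ω ∈ Set.Ioo ω₀ ω₁, Z₀ ω = 0 ∧ z₀ ω = -1 := by
  have hIopen : IsOpen (Set.Ioo ω₀ ω₁) := isOpen_Ioo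
  have hImeas : MeasurableSet (Set.Ioo ω₀ ω₁) := measurableSet_Ioo
  have hIfin : volume (Set.Ioo ω₀ ω₁) < ⊤ := by simp [Real.volume_Ioo]
  have hnorm2 : ∀ w : ℂ, ‖w‖ ^ 2 = w.re ^ 2 + w.im ^ 2 := by
    intro w
    rw [Complex.sq_norm, Complex.normSq_apply]; ring
  have hK0 : 0 ≤ K := le_trans (abs_nonneg _) (hK ((ω₀ + ω₁) / 2) ⟨by linarith, by linarith⟩)
  have hK1 : K < 1 := by
    have := Real.sqrt_nonneg (∫ x in Set.Ioo ω₀ ω₁, (z₀' x) ^ 2)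
    nlinarith
  have hzK : ∀ ω ∈ Set.Ioo ω₀ ω₁, z₀ ω ≤ K - 1 := by
    intro ω hω'
    have := (abs_le.1 (hK ω hω')).2
    linarith
  have hz1 : ∀ ω ∈ Set.Ioo ω₀ ω₁, |z₀ ω| ≤ 1 := by
    intro ω hω'
    have h := hsphere ω hω'
    have h2 : (z₀ ω) ^ 2 ≤ 1 := by nlinarith [sq_nonneg ‖Z₀ ω‖]
    exact abs_le.2 ⟨by nlinarith, by nlinarith⟩
  have hn1 : ∀ ω ∈ Set.Ioo ω₀ ω₁, ‖Z₀ ω‖ ≤ 1 := by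
    intro ω hω'
    have h := hsphere ω hω'
    nlinarith [norm_nonneg (Z₀ ω), sq_nonneg (z₀ ω)]
  -- differentiating the constraint
  have hrel : ∀ ω ∈ Set.Ioo ω₀ ω₁,
      (Z₀ ω).re * (Z₀' ω).re + (Z₀ ω).im * (Z₀' ω).im + z₀ ω * z₀' ω = 0 := by
    intro ω hω'
    have hre : HasDerivAt (fun t => (Z₀ t).re) ((Z₀' ω).re) ω :=
      Complex.reCLM.hasFDerivAt.comp_hasDerivAt ω (hZder ω hω')
    have him : HasDerivAt (fun t => (Z₀ t).im) ((Z₀' ω).im) ω :=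
      Complex.imCLM.hasFDerivAt.comp_hasDerivAt ω (hZder ω hω')
    have hD : HasDerivAt (fun t => (Z₀ t).re ^ 2 + (Z₀ t).im ^ 2 + z₀ t ^ 2)
        (((2 : ℕ) : ℝ) * (Z₀ ω).re ^ 1 * (Z₀' ω).re + ((2 : ℕ) : ℝ) * (Z₀ ω).im ^ 1 * (Z₀' ω).im
          + ((2 : ℕ) : ℝ) * z₀ ω ^ 1 * z₀' ω) ω :=
      ((hre.pow 2).add (him.pow 2)).add ((hzder ω hω').pow 2)
    have h0 : HasDerivAt (fun t => (Z₀ t).re ^ 2 + (Z₀ t).im ^ 2 + z₀ t ^ 2) 0 ω := by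
      refine (hasDerivAt_const ω (1 : ℝ)).congr_of_eventuallyEq ?_
      filter_upwards [hIopen.mem_nhds hω'] with t ht
      have h := hsphere t ht
      have h2 := hnorm2 (Z₀ t)
      linarith
    have huniq := hD.unique h0
    simp only [pow_one, Nat.cast_ofNat] at huniq
    nlinarith [huniq]
  set E : ℝ := ∫ x in Set.Ioo ω₀ ω₁, (‖Z₀' x‖ ^ 2 + G * ‖Z₀ x‖ ^ 2) with hE
  have hEnonneg : 0 ≤ E := setIntegral_nonneg hImeas fun x _ => by positivity
  have hEle : E ≤ 0 := by
    by_contra hpos'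
    push_neg at hpos'
    have hpos : 0 < E := hpos'
    have hfint : IntegrableOn (fun x => ‖Z₀' x‖ ^ 2 + G * ‖Z₀ x‖ ^ 2) (Set.Ioo ω₀ ω₁) := by
      by_contra h
      rw [hE, integral_undef h] at hpos
      exact lt_irrefl 0 hpos
    have hZcont : ContinuousOn Z₀ (Set.Ioo ω₀ ω₁) := fun ω hω' =>
      ((hZder ω hω').continuousAt).continuousWithinAt
    have hzcont : ContinuousOn z₀ (Set.Ioo ω₀ ω₁) := fun ω hω' =>
      ((hzder ω hω').continuousAt).continuousWithinAt
    have hZsm : AEStronglyMeasurable Z₀ (volume.restrict (Set.Ioo ω₀ ω₁)) :=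
      hZcont.aestronglyMeasurable hImeas
    have hzsm : AEStronglyMeasurable z₀ (volume.restrict (Set.Ioo ω₀ ω₁)) :=
      hzcont.aestronglyMeasurable hImeas
    have hZ'sm : AEStronglyMeasurable Z₀' (volume.restrict (Set.Ioo ω₀ ω₁)) := by
      refine ((measurable_deriv Z₀).aestronglyMeasurable).congr ?_
      exact (ae_restrict_iff' hImeas).2 (ae_of_all _ fun x hx => (hZder x hx).deriv)
    have hz'sm : AEStronglyMeasurable z₀' (volume.restrict (Set.Ioo ω₀ ω₁)) := by
      refine ((measurable_deriv z₀).aestronglyMeasurable).congr ?_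
      exact (ae_restrict_iff' hImeas).2 (ae_of_all _ fun x hx => (hzder x hx).deriv)
    have hn'2sm : AEStronglyMeasurable (fun x => ‖Z₀' x‖ ^ 2)
        (volume.restrict (Set.Ioo ω₀ ω₁)) :=
      (hZ'sm.norm.aemeasurable.pow_const 2).aestronglyMeasurable
    have hn2sm : AEStronglyMeasurable (fun x => ‖Z₀ x‖ ^ 2)
        (volume.restrict (Set.Ioo ω₀ ω₁)) :=
      (hZsm.norm.aemeasurable.pow_const 2).aestronglyMeasurable
    have hz'2sm : AEStronglyMeasurable (fun x => (z₀' x) ^ 2)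
        (volume.restrict (Set.Ioo ω₀ ω₁)) :=
      (hz'sm.aemeasurable.pow_const 2).aestronglyMeasurable
    have hAint : IntegrableOn (fun x => ‖Z₀' x‖ ^ 2) (Set.Ioo ω₀ ω₁) := by
      refine hfint.mono' hn'2sm (ae_of_all _ fun x => ?_)
      rw [Real.norm_eq_abs, _root_.abs_of_nonneg (by positivity)]
      nlinarith [sq_nonneg ‖Z₀ x‖]
    have hBint : IntegrableOn (fun x => ‖Z₀ x‖ ^ 2) (Set.Ioo ω₀ ω₁) := by
      refine Integrable.mono' (g := fun _ => (1 : ℝ))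
        (integrableOn_const hIfin.ne) hn2sm ?_
      refine (ae_restrict_iff' hImeas).2 (ae_of_all _ fun x hx => ?_)
      rw [Real.norm_eq_abs, _root_.abs_of_nonneg (by positivity)]
      show ‖Z₀ x‖ ^ 2 ≤ 1
      nlinarith [hn1 x hx, norm_nonneg (Z₀ x)]
    set A : ℝ := ∫ x in Set.Ioo ω₀ ω₁, ‖Z₀' x‖ ^ 2 with hA
    set B : ℝ := ∫ x in Set.Ioo ω₀ ω₁, ‖Z₀ x‖ ^ 2 with hB
    set S : ℝ := ∫ x in Set.Ioo ω₀ ω₁, (z₀' x) ^ 2 with hS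
    set M : ℝ := C * Real.sqrt E with hM
    have hMpos : 0 < M := by
      rw [hM]
      exact mul_pos hC (Real.sqrt_pos.2 hpos)
    have hcs : ∀ a b : ℂ, (a.re * b.re + a.im * b.im) ^ 2 ≤ ‖a‖ ^ 2 * ‖b‖ ^ 2 := by
      intro a b
      rw [hnorm2 a, hnorm2 b]
      nlinarith [sq_nonneg (a.re * b.im - a.im * b.re)]
    have h1K : 0 < 1 - K := by linarith
    -- pointwise bound on the cross term
    have hdot : ∀ x ∈ Set.Ioo ω₀ ω₁,
        |(Z₀' x).re * (Z₀ x).re + (Z₀' x).im * (Z₀ x).im| ≤ ‖Z₀' x‖ * M := by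
      intro x hx
      refine aux_abs_le (by positivity) ?_
      have h1 := hcs (Z₀' x) (Z₀ x)
      have h2 := hembed x hx
      have h2' : ‖Z₀ x‖ ^ 2 ≤ M ^ 2 := by nlinarith [norm_nonneg (Z₀ x)]
      have h3 : ‖Z₀' x‖ ^ 2 * ‖Z₀ x‖ ^ 2 ≤ ‖Z₀' x‖ ^ 2 * M ^ 2 :=
        mul_le_mul_of_nonneg_left h2' (sq_nonneg _)
      calc ((Z₀' x).re * (Z₀ x).re + (Z₀' x).im * (Z₀ x).im) ^ 2
          ≤ ‖Z₀' x‖ ^ 2 * ‖Z₀ x‖ ^ 2 := h1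
        _ ≤ ‖Z₀' x‖ ^ 2 * M ^ 2 := h3
        _ = (‖Z₀' x‖ * M) ^ 2 := by ring
    have hz'bd : ∀ x ∈ Set.Ioo ω₀ ω₁, (z₀' x) ^ 2 ≤ (M / (1 - K)) ^ 2 * ‖Z₀' x‖ ^ 2 := by
      intro x hx
      have hr := hrel x hx
      have hd := hdot x hx
      have hzK' := hzK x hx
      have h1 : |z₀ x * z₀' x| ≤ ‖Z₀' x‖ * M := by
        have : z₀ x * z₀' x = -((Z₀' x).re * (Z₀ x).re + (Z₀' x).im * (Z₀ x).im) := by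
          nlinarith [hr]
        rw [this, abs_neg]
        exact hd
      have habs : (1 - K) * |z₀' x| ≤ ‖Z₀' x‖ * M := by
        calc (1 - K) * |z₀' x| ≤ |z₀ x| * |z₀' x| := by
              refine mul_le_mul_of_nonneg_right ?_ (abs_nonneg _)
              rw [_root_.abs_of_nonpos (by linarith : z₀ x ≤ 0)]
              linarith
          _ = |z₀ x * z₀' x| := (abs_mul _ _).symm
          _ ≤ ‖Z₀' x‖ * M := h1
      have h2 : (1 - K) ^ 2 * (z₀' x) ^ 2 ≤ M ^ 2 * ‖Z₀' x‖ ^ 2 := by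
        have hms := mul_self_le_mul_self (by positivity) habs
        nlinarith [_root_.sq_abs (z₀' x)]
      have h3 : (M / (1 - K)) ^ 2 * (1 - K) ^ 2 = M ^ 2 := by
        field_simp
      nlinarith [h2, sq_nonneg (z₀' x), sq_nonneg (1 - K), h1K, mul_pos h1K h1K]
    have hSint : IntegrableOn (fun x => (z₀' x) ^ 2) (Set.Ioo ω₀ ω₁) := by
      refine (hAint.const_mul ((M / (1 - K)) ^ 2)).mono' hz'2sm ?_
      refine (ae_restrict_iff' hImeas).2 (ae_of_all _ fun x hx => ?_)
      rw [Real.norm_eq_abs, _root_.abs_of_nonneg (by positivity)]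
      exact hz'bd x hx
    have hSnonneg : 0 ≤ S := setIntegral_nonneg hImeas fun x _ => sq_nonneg _
    have hBnonneg : 0 ≤ B := setIntegral_nonneg hImeas fun x _ => sq_nonneg _
    set gfun : ℝ → ℂ := fun ω => (starRingEnd ℂ) (Z₀' ω) * (Z₀' ω * (z₀ ω : ℂ) - Z₀ ω * (z₀' ω : ℂ))
          - (G : ℂ) * ((‖Z₀ ω‖ : ℂ)) ^ 2 with hgdef
    have hgre : ∀ x, (gfun x).re = z₀ x * ‖Z₀' x‖ ^ 2
        - z₀' x * ((Z₀' x).re * (Z₀ x).re + (Z₀' x).im * (Z₀ x).im) - G * ‖Z₀ x‖ ^ 2 := by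
      intro x
      rw [hnorm2 (Z₀' x)]
      simp only [hgdef, Complex.sub_re, Complex.mul_re, Complex.mul_im, Complex.sub_im,
        Complex.conj_re, Complex.conj_im, Complex.ofReal_re, Complex.ofReal_im,
        Complex.ofReal_pow, pow_two]
      ring
    have hgsm : AEStronglyMeasurable gfun (volume.restrict (Set.Ioo ω₀ ω₁)) := by
      refine AEStronglyMeasurable.sub (AEStronglyMeasurable.mul ?_ (AEStronglyMeasurable.sub
        (hZ'sm.mul ?_) (hZsm.mul ?_))) (aestronglyMeasurable_const.mul ?_)
      · exact Complex.continuous_conj.comp_aestronglyMeasurable hZ'sm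
      · exact Complex.continuous_ofReal.comp_aestronglyMeasurable hzsm
      · exact Complex.continuous_ofReal.comp_aestronglyMeasurable hz'sm
      · exact (Complex.continuous_ofReal.comp_aestronglyMeasurable hZsm.norm).pow 2
    have hgint : Integrable gfun (volume.restrict (Set.Ioo ω₀ ω₁)) := by
      have t1 : IntegrableOn (fun x => ‖Z₀' x‖ ^ 2 + (z₀' x) ^ 2) (Set.Ioo ω₀ ω₁) :=
        hAint.add hSint
      have t2 : IntegrableOn (fun x => (M / 2) * (‖Z₀' x‖ ^ 2 + (z₀' x) ^ 2)) (Set.Ioo ω₀ ω₁) :=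
        t1.const_mul _
      have t3 : IntegrableOn (fun x => ‖Z₀' x‖ ^ 2 + (M / 2) * (‖Z₀' x‖ ^ 2 + (z₀' x) ^ 2)
          + G * ‖Z₀ x‖ ^ 2) (Set.Ioo ω₀ ω₁) := (hAint.add t2).add (hBint.const_mul _)
      refine t3.mono' hgsm ?_
      refine (ae_restrict_iff' hImeas).2 (ae_of_all _ fun x hx => ?_)
      have n2 : ‖(G : ℂ) * ((‖Z₀ x‖ : ℝ) : ℂ) ^ 2‖ = G * ‖Z₀ x‖ ^ 2 := by
        rw [norm_mul, norm_pow, Complex.norm_real, Complex.norm_real, Real.norm_eq_abs,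
          Real.norm_eq_abs, _root_.abs_of_pos hG, _root_.abs_of_nonneg (norm_nonneg _)]
      have n1 : ‖(starRingEnd ℂ) (Z₀' x) * (Z₀' x * (z₀ x : ℂ) - Z₀ x * (z₀' x : ℂ))‖
          ≤ ‖Z₀' x‖ * (‖Z₀' x‖ * |z₀ x| + ‖Z₀ x‖ * |z₀' x|) := by
        rw [norm_mul, RCLike.norm_conj]
        refine mul_le_mul_of_nonneg_left ?_ (norm_nonneg _)
        refine le_trans (norm_sub_le _ _) ?_
        rw [norm_mul, norm_mul, Complex.norm_real, Complex.norm_real, Real.norm_eq_abs,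
          Real.norm_eq_abs]
      have e1 : ‖gfun x‖ ≤ ‖Z₀' x‖ * (‖Z₀' x‖ * |z₀ x| + ‖Z₀ x‖ * |z₀' x|) + G * ‖Z₀ x‖ ^ 2 := by
        rw [hgdef]
        refine le_trans (norm_sub_le _ _) ?_
        rw [n2]
        exact add_le_add_left n1 _
      refine le_trans e1 ?_
      have h2 := hz1 x hx
      have h3 := hembed x hx
      have h4 : ‖Z₀' x‖ * (‖Z₀ x‖ * |z₀' x|) ≤ (M / 2) * (‖Z₀' x‖ ^ 2 + (z₀' x) ^ 2) := by
        have h5 : ‖Z₀ x‖ * |z₀' x| ≤ M * |z₀' x| :=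
          mul_le_mul_of_nonneg_right h3 (abs_nonneg _)
        nlinarith [norm_nonneg (Z₀' x), abs_nonneg (z₀' x), sq_nonneg (‖Z₀' x‖ - |z₀' x|),
          hMpos.le, _root_.sq_abs (z₀' x)]
      nlinarith [norm_nonneg (Z₀' x), abs_nonneg (z₀ x), norm_nonneg (Z₀ x), sq_nonneg ‖Z₀' x‖,
        mul_le_mul_of_nonneg_left h2 (mul_nonneg (norm_nonneg (Z₀' x)) (norm_nonneg (Z₀' x)))]
    have hre0 : ∫ x in Set.Ioo ω₀ ω₁, (gfun x).re = 0 := by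
      have hcomm := Complex.reCLM.integral_comp_comm hgint
      simp only [Complex.reCLM_apply] at hcomm
      rw [hcomm, hint]
      simp
    have haint : IntegrableOn (fun x => z₀ x * ‖Z₀' x‖ ^ 2) (Set.Ioo ω₀ ω₁) := by
      refine hAint.mono' (hzsm.aemeasurable.mul hn'2sm.aemeasurable).aestronglyMeasurable ?_
      refine (ae_restrict_iff' hImeas).2 (ae_of_all _ fun x hx => ?_)
      rw [Real.norm_eq_abs, abs_mul, _root_.abs_of_nonneg (sq_nonneg ‖Z₀' x‖ : (0:ℝ) ≤ _)]
      nlinarith [hz1 x hx, sq_nonneg ‖Z₀' x‖, abs_nonneg (z₀ x)]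
    have hbint : IntegrableOn
        (fun x => z₀' x * ((Z₀' x).re * (Z₀ x).re + (Z₀' x).im * (Z₀ x).im)) (Set.Ioo ω₀ ω₁) := by
      have t1 : IntegrableOn (fun x => ‖Z₀' x‖ ^ 2 + (z₀' x) ^ 2) (Set.Ioo ω₀ ω₁) :=
        hAint.add hSint
      have t2 : IntegrableOn (fun x => (M / 2) * (‖Z₀' x‖ ^ 2 + (z₀' x) ^ 2)) (Set.Ioo ω₀ ω₁) :=
        t1.const_mul _
      refine t2.mono' ?_ ?_
      · refine (hz'sm.aemeasurable.mul ?_).aestronglyMeasurable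
        exact ((Complex.measurable_re.comp_aemeasurable hZ'sm.aemeasurable).mul
            (Complex.measurable_re.comp_aemeasurable hZsm.aemeasurable)).add
          ((Complex.measurable_im.comp_aemeasurable hZ'sm.aemeasurable).mul
            (Complex.measurable_im.comp_aemeasurable hZsm.aemeasurable))
      · refine (ae_restrict_iff' hImeas).2 (ae_of_all _ fun x hx => ?_)
        have hd := hdot x hx
        rw [Real.norm_eq_abs, abs_mul]
        have h6 : |z₀' x| * |(Z₀' x).re * (Z₀ x).re + (Z₀' x).im * (Z₀ x).im|
            ≤ |z₀' x| * (‖Z₀' x‖ * M) := mul_le_mul_of_nonneg_left hd (abs_nonneg _)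
        refine le_trans h6 ?_
        nlinarith [sq_nonneg (‖Z₀' x‖ - |z₀' x|), hMpos.le, abs_nonneg (z₀' x),
          norm_nonneg (Z₀' x), _root_.sq_abs (z₀' x)]
    -- split the real part of the integral identity
    have hsplit : (∫ x in Set.Ioo ω₀ ω₁, z₀ x * ‖Z₀' x‖ ^ 2)
        - (∫ x in Set.Ioo ω₀ ω₁, z₀' x * ((Z₀' x).re * (Z₀ x).re + (Z₀' x).im * (Z₀ x).im))
        - G * B = 0 := by
      rw [← hre0]
      have t1 : IntegrableOn (fun x => z₀ x * ‖Z₀' x‖ ^ 2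
          - z₀' x * ((Z₀' x).re * (Z₀ x).re + (Z₀' x).im * (Z₀ x).im)) (Set.Ioo ω₀ ω₁) :=
        haint.sub hbint
      rw [hB, ← integral_const_mul, ← integral_sub haint hbint,
        ← integral_sub t1 (hBint.const_mul G)]
      exact (integral_congr_ae (ae_of_all _ fun x => (hgre x).symm))
    set bI : ℝ := ∫ x in Set.Ioo ω₀ ω₁,
      z₀' x * ((Z₀' x).re * (Z₀ x).re + (Z₀' x).im * (Z₀ x).im) with hbI
    have hEeq : E = A + G * B := by
      rw [hE, integral_add hAint (hBint.const_mul G), integral_const_mul, hA, hB]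
    have haA : A + (∫ x in Set.Ioo ω₀ ω₁, z₀ x * ‖Z₀' x‖ ^ 2) ≤ K * A := by
      have hsum : A + (∫ x in Set.Ioo ω₀ ω₁, z₀ x * ‖Z₀' x‖ ^ 2)
          = ∫ x in Set.Ioo ω₀ ω₁, (‖Z₀' x‖ ^ 2 + z₀ x * ‖Z₀' x‖ ^ 2) := by
        rw [integral_add hAint haint, hA]
      rw [hsum]
      have hKA : K * A = ∫ x in Set.Ioo ω₀ ω₁, K * ‖Z₀' x‖ ^ 2 := by
        rw [integral_const_mul, hA]
      rw [hKA]
      refine setIntegral_mono_on (hAint.add haint) (hAint.const_mul K) hImeas fun x hx => ?_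
      have h7 := (abs_le.1 (hK x hx)).2
      nlinarith [sq_nonneg ‖Z₀' x‖]
    have hEKb : E ≤ K * A - bI := by
      have h8 : (∫ x in Set.Ioo ω₀ ω₁, z₀ x * ‖Z₀' x‖ ^ 2) - bI - G * B = 0 := hsplit
      linarith [hEeq, haA, h8]
    -- the parametrized bound on the cross term
    have hbb : ∀ t : ℝ, 0 < t → -(2 * t) * bI ≤ M * (t ^ 2 * A + S) := by
      intro t ht
      have hneg : -(2 * t) * bI = ∫ x in Set.Ioo ω₀ ω₁,
          -(2 * t) * (z₀' x * ((Z₀' x).re * (Z₀ x).re + (Z₀' x).im * (Z₀ x).im)) := by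
        rw [integral_const_mul, hbI]
      have hrhs : M * (t ^ 2 * A + S) = ∫ x in Set.Ioo ω₀ ω₁,
          M * (t ^ 2 * ‖Z₀' x‖ ^ 2 + (z₀' x) ^ 2) := by
        rw [integral_const_mul, integral_add (hAint.const_mul (t ^ 2)) hSint,
          integral_const_mul, hA, hS]
      rw [hneg, hrhs]
      have t1 : IntegrableOn (fun x => t ^ 2 * ‖Z₀' x‖ ^ 2) (Set.Ioo ω₀ ω₁) :=
        hAint.const_mul _
      have t2 : IntegrableOn (fun x => t ^ 2 * ‖Z₀' x‖ ^ 2 + (z₀' x) ^ 2) (Set.Ioo ω₀ ω₁) :=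
        t1.add hSint
      have t3 : IntegrableOn (fun x => M * (t ^ 2 * ‖Z₀' x‖ ^ 2 + (z₀' x) ^ 2)) (Set.Ioo ω₀ ω₁) :=
        t2.const_mul _
      refine setIntegral_mono_on (hbint.const_mul _) t3 hImeas fun x hx => ?_
      have hd := hdot x hx
      have h9 : -(z₀' x * ((Z₀' x).re * (Z₀ x).re + (Z₀' x).im * (Z₀ x).im))
          ≤ |z₀' x| * (‖Z₀' x‖ * M) := by
        calc -(z₀' x * ((Z₀' x).re * (Z₀ x).re + (Z₀' x).im * (Z₀ x).im))
            ≤ |z₀' x * ((Z₀' x).re * (Z₀ x).re + (Z₀' x).im * (Z₀ x).im)| := neg_le_abs _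
          _ = |z₀' x| * |(Z₀' x).re * (Z₀ x).re + (Z₀' x).im * (Z₀ x).im| := abs_mul _ _
          _ ≤ |z₀' x| * (‖Z₀' x‖ * M) := mul_le_mul_of_nonneg_left hd (abs_nonneg _)
      nlinarith [sq_nonneg (t * ‖Z₀' x‖ - |z₀' x|), hMpos.le, ht.le, _root_.sq_abs (z₀' x),
        abs_nonneg (z₀' x), norm_nonneg (Z₀' x), mul_le_mul_of_nonneg_left h9 (by linarith : (0:ℝ) ≤ 2 * t)]
    have hfinal : ∀ t : ℝ, 0 < t → 2 * t * (E - K * A) ≤ M * (t ^ 2 * A + S) := by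
      intro t ht
      have h10 := hbb t ht
      have h10' := mul_le_mul_of_nonneg_left (by linarith [hEKb] : E - K * A ≤ -bI)
        (by linarith : (0:ℝ) ≤ 2 * t)
      nlinarith [h10, h10']
    have hAE : A ≤ E := by
      rw [hEeq]
      nlinarith [hBnonneg, hG.le]
    have hAnonneg : 0 ≤ A := setIntegral_nonneg hImeas fun x _ => sq_nonneg _
    rcases eq_or_lt_of_le hSnonneg with hS0 | hSpos
    · -- S = 0 : take t = (1-K)/M
      have ht : (0 : ℝ) < (1 - K) / M := div_pos h1K hMpos
      have h11 := hfinal ((1 - K) / M) ht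
      rw [← hS0] at h11
      have h12 : M * (((1 - K) / M) ^ 2 * A + 0) = (1 - K) * ((1 - K) / M) * A := by
        field_simp
        ring
      rw [h12] at h11
      -- 2t(E - KA) ≤ (1-K) t A, divide by t
      have h13 : 2 * (E - K * A) ≤ (1 - K) * A := by
        nlinarith [h11, ht]
      nlinarith [hAE, hK0, hpos, hK1, hAnonneg]
    · -- S > 0 : take t = √S/√E
      set sE : ℝ := Real.sqrt E with hsE
      set sS : ℝ := Real.sqrt S with hsS
      have hsEpos : 0 < sE := Real.sqrt_pos.2 hpos
      have hsSpos : 0 < sS := Real.sqrt_pos.2 hSpos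
      have hsE2 : sE * sE = E := Real.mul_self_sqrt hEnonneg
      have hsS2 : sS * sS = S := Real.mul_self_sqrt hSnonneg
      have ht : (0 : ℝ) < sS / sE := div_pos hsSpos hsEpos
      have h11 := hfinal (sS / sE) ht
      have e2 : sS / sE * sE = sS := div_mul_cancel₀ _ hsEpos.ne'
      have e1 : (sS / sE) ^ 2 * E = S := by
        rw [div_pow]
        rw [← hsE2, ← hsS2]
        field_simp
      -- multiply h11 by sE
      have h14 := mul_le_mul_of_nonneg_right h11 hsEpos.le
      have h15 : 2 * (sS / sE) * (E - K * A) * sE = 2 * sS * (E - K * A) := by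
        field_simp
      have h16 : M * ((sS / sE) ^ 2 * A + S) * sE = C * ((sS / sE) ^ 2 * A * E + S * E) := by
        calc M * ((sS / sE) ^ 2 * A + S) * sE
            = C * ((sS / sE) ^ 2 * A * (sE * sE) + S * (sE * sE)) := by rw [hM]; ring
          _ = C * ((sS / sE) ^ 2 * A * E + S * E) := by rw [hsE2]
      rw [h15, h16] at h14
      have h17 : (sS / sE) ^ 2 * A * E = S * A := by
        have h18 : (sS / sE) ^ 2 * A * E = (sS / sE) ^ 2 * E * A := by ring
        rw [h18, e1]
      rw [h17] at h14
      -- 2 sS (E - KA) ≤ C (S A + S E) ≤ 2 C S E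
      have hSA : S * A ≤ S * E := mul_le_mul_of_nonneg_left hAE hSpos.le
      have h19 : 2 * sS * (E - K * A) ≤ 2 * sS * (C * sS * E) := by
        have hq : C * (S * A + S * E) ≤ C * (S * E + S * E) :=
          mul_le_mul_of_nonneg_left (by linarith) hC.le
        have hq2 : C * (S * E + S * E) = 2 * sS * (C * sS * E) := by
          rw [← hsS2]; ring
        linarith [h14, hq, hq2.le, hq2.ge]
      have h20 : E - K * A ≤ C * sS * E :=
        (mul_le_mul_iff_right₀ (by positivity : (0:ℝ) < 2 * sS)).mp h19
      have h21 : K * A ≤ K * E := mul_le_mul_of_nonneg_left hAE hK0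
      have h22 : (K + C * sS) * E < 1 * E := mul_lt_mul_of_pos_right hsmall hpos
      linarith only [h20, h21, h22]
  -- conclusion
  intro ω hω'
  have hsq0 : Real.sqrt E = 0 := Real.sqrt_eq_zero'.2 hEle
  have hEmb : ‖Z₀ ω‖ ≤ C * Real.sqrt E := hembed ω hω'
  rw [hsq0, mul_zero] at hEmb
  have hZ0 : Z₀ ω = 0 := norm_le_zero_iff.1 hEmb
  refine ⟨hZ0, ?_⟩
  have hsp := hsphere ω hω'
  rw [hZ0] at hsp
  simp at hsp
  have hzz := hzK ω hω'
  rcases hsp with h | h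
  · linarith
  · exact h
end

section
/- Define α_C = ∫₀^{β_C} dt/√(−2t³ + Ct² + 2t) where β_C = (C + √(C²+16))/4. Then α_C → 0 as C → −∞. -/
open MeasureTheory Set Filter

/-- The bound function `t ↦ t^(-1/2) + (β - t)^(-1/2)` is interval integrable. -/
lemma stmt8_aux_intable (β : ℝ) :
    IntervalIntegrable (fun t : ℝ => t ^ (-(1/2) : ℝ) + (β - t) ^ (-(1/2) : ℝ)) volume 0 β := by
  apply IntervalIntegrable.add
  · exact intervalIntegral.intervalIntegrable_rpow' (by norm_num)
  · have h : IntervalIntegrable (fun t : ℝ => t ^ (-(1/2) : ℝ)) volume 0 β :=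
      intervalIntegral.intervalIntegrable_rpow' (by norm_num)
    simpa using (h.comp_sub_left β).symm

lemma stmt8_aux_integral (β : ℝ) (hβ : 0 ≤ β) :
    ∫ t in (0:ℝ)..β, (t ^ (-(1/2) : ℝ) + (β - t) ^ (-(1/2) : ℝ)) = 4 * Real.sqrt β := by
  have h1 : ∫ t in (0:ℝ)..β, t ^ (-(1/2) : ℝ) = 2 * Real.sqrt β := by
    rw [integral_rpow (Or.inl (by norm_num)), Real.sqrt_eq_rpow]
    norm_num
    ring
  have h2 : ∫ t in (0:ℝ)..β, (β - t) ^ (-(1/2) : ℝ) = 2 * Real.sqrt β := by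
    have h := intervalIntegral.integral_comp_sub_left (a := 0) (b := β)
      (fun s : ℝ => s ^ (-(1/2) : ℝ)) β
    simp only [sub_self, sub_zero] at h
    rw [h]; exact h1
  rw [intervalIntegral.integral_add (intervalIntegral.intervalIntegrable_rpow' (by norm_num))
    (by simpa using ((intervalIntegral.intervalIntegrable_rpow' (a := 0) (b := β)
      (r := -(1/2)) (by norm_num)).comp_sub_left β).symm), h1, h2]
  ring

/-- Pointwise bound on the integrand. -/
lemma stmt8_aux_pointwise (C : ℝ) (hC : C < 0) (t : ℝ)
    (ht : t ∈ Set.Ioo 0 ((C + Real.sqrt (C ^ 2 + 16)) / 4)) :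
    1 / Real.sqrt (-2 * t ^ 3 + C * t ^ 2 + 2 * t) ≤
      t ^ (-(1/2) : ℝ) + ((C + Real.sqrt (C ^ 2 + 16)) / 4 - t) ^ (-(1/2) : ℝ) := by
  set s := Real.sqrt (C ^ 2 + 16) with hs
  have hs2 : s ^ 2 = C ^ 2 + 16 := Real.sq_sqrt (by positivity)
  have hs0 : 0 ≤ s := Real.sqrt_nonneg _
  set β := (C + s) / 4 with hβ
  have hβpos : 0 < β := ht.1.trans ht.2
  have hroot : 2 * β ^ 2 - C * β - 2 = 0 := by
    rw [hβ]; field_simp; nlinarith [hs2]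
  obtain ⟨ht0, htβ⟩ := ht
  rcases le_or_gt t (β / 2) with h | h
  · -- P ≥ t
    have hq : (0:ℝ) ≤ -2 * t ^ 2 + C * t + 1 := by
      have h8 : 8 * t - C ≤ s := by rw [hβ] at h; linarith
      have h8' : (0:ℝ) ≤ 8 * t - C := by linarith
      nlinarith [mul_self_le_mul_self h8' h8]
    have hP : t ≤ -2 * t ^ 3 + C * t ^ 2 + 2 * t := by
      nlinarith [mul_nonneg ht0.le hq]
    have h1 : 1 / Real.sqrt (-2 * t ^ 3 + C * t ^ 2 + 2 * t) ≤ 1 / Real.sqrt t := by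
      apply one_div_le_one_div_of_le (Real.sqrt_pos.mpr ht0)
      exact Real.sqrt_le_sqrt hP
    have h2 : 1 / Real.sqrt t = t ^ (-(1/2) : ℝ) := by
      rw [Real.rpow_neg ht0.le, Real.sqrt_eq_rpow, one_div, one_div]
    have h3 : (0:ℝ) ≤ (β - t) ^ (-(1/2) : ℝ) := Real.rpow_nonneg (by linarith) _
    calc 1 / Real.sqrt (-2 * t ^ 3 + C * t ^ 2 + 2 * t) ≤ 1 / Real.sqrt t := h1
      _ = t ^ (-(1/2) : ℝ) := h2
      _ ≤ _ := by linarith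
  · -- P ≥ β - t
    have hkey : β * (-2 * t ^ 3 + C * t ^ 2 + 2 * t) = 2 * t * (β - t) * (t * β + 1) := by
      linear_combination (-(t ^ 2)) * hroot
    have hP : β - t ≤ -2 * t ^ 3 + C * t ^ 2 + 2 * t := by
      have haux : (0:ℝ) ≤ (β - t) * (2 * t ^ 2 * β + 2 * t - β) := by
        apply mul_nonneg (by linarith)
        nlinarith [mul_pos ht0 hβpos]
      nlinarith [hkey]
    have h1 : 1 / Real.sqrt (-2 * t ^ 3 + C * t ^ 2 + 2 * t) ≤ 1 / Real.sqrt (β - t) := by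
      apply one_div_le_one_div_of_le (Real.sqrt_pos.mpr (by linarith))
      exact Real.sqrt_le_sqrt hP
    have h2 : 1 / Real.sqrt (β - t) = (β - t) ^ (-(1/2) : ℝ) := by
      rw [Real.rpow_neg (by linarith), Real.sqrt_eq_rpow, one_div, one_div]
    have h3 : (0:ℝ) ≤ t ^ (-(1/2) : ℝ) := Real.rpow_nonneg ht0.le _
    calc 1 / Real.sqrt (-2 * t ^ 3 + C * t ^ 2 + 2 * t) ≤ 1 / Real.sqrt (β - t) := h1
      _ = (β - t) ^ (-(1/2) : ℝ) := h2
      _ ≤ _ := by linarith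

/-- The half-period `α_C` tends to `0` as `C → -∞`. -/
theorem stmt8 :
    Filter.Tendsto
      (fun C : ℝ => ∫ t in Set.Ioo 0 ((C + Real.sqrt (C ^ 2 + 16)) / 4),
        1 / Real.sqrt (-2 * t ^ 3 + C * t ^ 2 + 2 * t))
      Filter.atBot (nhds 0) := by
  have hβ0 : Tendsto (fun C : ℝ => (C + Real.sqrt (C ^ 2 + 16)) / 4) atBot (nhds 0) := by
    have heq : ∀ C : ℝ, (C + Real.sqrt (C ^ 2 + 16)) / 4
        = 4 * (Real.sqrt (C ^ 2 + 16) - C)⁻¹ := by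
      intro C
      have hs2 : Real.sqrt (C ^ 2 + 16) ^ 2 = C ^ 2 + 16 := Real.sq_sqrt (by positivity)
      have hs0 : 0 ≤ Real.sqrt (C ^ 2 + 16) := Real.sqrt_nonneg _
      have hne : 0 < Real.sqrt (C ^ 2 + 16) - C := by nlinarith
      field_simp
      nlinarith
    simp only [heq]
    have hden : Tendsto (fun C : ℝ => Real.sqrt (C ^ 2 + 16) - C) atBot atTop := by
      apply tendsto_atTop_mono (fun C => ?_) tendsto_neg_atBot_atTop
      have := Real.sqrt_nonneg (C ^ 2 + 16)
      linarith
    simpa using hden.inv_tendsto_atTop.const_mul (4:ℝ)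
  have hupper : Tendsto (fun C : ℝ => 4 * Real.sqrt ((C + Real.sqrt (C ^ 2 + 16)) / 4))
      atBot (nhds 0) := by
    have h := (Real.continuous_sqrt.tendsto 0).comp hβ0
    simpa using h.const_mul (4:ℝ)
  apply tendsto_of_tendsto_of_tendsto_of_le_of_le' tendsto_const_nhds hupper
  · filter_upwards with C
    exact setIntegral_nonneg measurableSet_Ioo (fun t _ => by positivity)
  · filter_upwards [eventually_lt_atBot (0:ℝ)] with C hC
    set β := (C + Real.sqrt (C ^ 2 + 16)) / 4 with hβ
    by_cases hβpos : 0 < β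
    · have hint : IntegrableOn (fun t : ℝ => t ^ (-(1/2) : ℝ) + (β - t) ^ (-(1/2) : ℝ))
          (Set.Ioo 0 β) := by
        have := stmt8_aux_intable β
        rw [intervalIntegrable_iff_integrableOn_Ioo_of_le hβpos.le] at this
        exact this
      have hmono : (∫ t in Set.Ioo 0 β, 1 / Real.sqrt (-2 * t ^ 3 + C * t ^ 2 + 2 * t))
          ≤ ∫ t in Set.Ioo 0 β, (t ^ (-(1/2) : ℝ) + (β - t) ^ (-(1/2) : ℝ)) := by
        apply integral_mono_of_nonneg
        · filter_upwards with t; positivity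
        · exact hint
        · exact ae_restrict_of_forall_mem measurableSet_Ioo (stmt8_aux_pointwise C hC)
      have hval : (∫ t in Set.Ioo 0 β, (t ^ (-(1/2) : ℝ) + (β - t) ^ (-(1/2) : ℝ)))
          = 4 * Real.sqrt β := by
        rw [← integral_Ioc_eq_integral_Ioo, ← intervalIntegral.integral_of_le hβpos.le]
        exact stmt8_aux_integral β hβpos.le
      rw [hval] at hmono
      exact hmono
    · rw [Set.Ioo_eq_empty hβpos]
      simp
end

section
/- Suppose z ∈ C³((ω*,ω^*)) satisfies z z''' + 3z² z' + z'(1 − z'') = 0 on the interval, and z does not vanish on the interval. Then there exists a constant C ∈ ℝ such that z'' = −3z² + Cz + 1 on (ω*,ω^*). -/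
/-- Conversely, a nonvanishing solution of the third-order invariant-set ODE
satisfies `z'' = -3z² + Cz + 1` for some constant `C`. -/
theorem stmt10 (ω₀ ω₁ : ℝ) (hω : ω₀ < ω₁)
    (z z' z'' z''' : ℝ → ℝ)
    (h1 : ∀ ω ∈ Set.Ioo ω₀ ω₁, HasDerivAt z (z' ω) ω)
    (h2 : ∀ ω ∈ Set.Ioo ω₀ ω₁, HasDerivAt z' (z'' ω) ω)
    (h3 : ∀ ω ∈ Set.Ioo ω₀ ω₁, HasDerivAt z'' (z''' ω) ω)
    (hODE : ∀ ω ∈ Set.Ioo ω₀ ω₁,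
      z ω * z''' ω + 3 * (z ω) ^ 2 * z' ω + z' ω * (1 - z'' ω) = 0)
    (hz : ∀ ω ∈ Set.Ioo ω₀ ω₁, z ω ≠ 0) :
    ∃ C : ℝ, ∀ ω ∈ Set.Ioo ω₀ ω₁, z'' ω = -3 * (z ω) ^ 2 + C * z ω + 1 := by
  set g : ℝ → ℝ := fun ω => (z'' ω + 3 * (z ω) ^ 2 - 1) / z ω with hg
  have hgd : ∀ ω ∈ Set.Ioo ω₀ ω₁, HasDerivAt g 0 ω := by
    intro ω hωm
    have hnum : HasDerivAt (fun t => z'' t + 3 * (z t) ^ 2 - 1)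
        (z''' ω + 3 * (2 * z ω * z' ω)) ω := by
      have := ((h3 ω hωm).add (((h1 ω hωm).pow 2).const_mul 3)).sub_const 1
      simpa [pow_one, mul_comm, mul_left_comm, mul_assoc] using this
    have := hnum.div (h1 ω hωm) (hz ω hωm)
    convert this using 1
    case e'_4 => rfl
    case e'_5 => rfl
    case e'_8 => rfl
    have hODE' := hODE ω hωm
    have hz' := hz ω hωm
    field_simp
    nlinarith [hODE']
  have key : ∀ x ∈ Set.Ioo ω₀ ω₁, ∀ y ∈ Set.Ioo ω₀ ω₁, x < y → g x = g y := by
    intro x hx y hy hxy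
    have hsub : Set.Icc x y ⊆ Set.Ioo ω₀ ω₁ := fun t ht =>
      ⟨lt_of_lt_of_le hx.1 ht.1, lt_of_le_of_lt ht.2 hy.2⟩
    have hcont : ContinuousOn g (Set.Icc x y) := fun t ht =>
      (hgd t (hsub ht)).continuousAt.continuousWithinAt
    have hderiv : ∀ t ∈ Set.Ioo x y, HasDerivAt g 0 t := fun t ht =>
      hgd t (hsub ⟨le_of_lt ht.1, le_of_lt ht.2⟩)
    obtain ⟨c, hc, hc2⟩ := exists_hasDerivAt_eq_slope g (fun _ => 0) hxy hcont hderiv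
    have : (g y - g x) / (y - x) = 0 := hc2.symm
    have hne : y - x ≠ 0 := sub_ne_zero.mpr (ne_of_gt hxy)
    field_simp at this
    linarith [this]
  have hmid : (ω₀ + ω₁) / 2 ∈ Set.Ioo ω₀ ω₁ := ⟨by linarith, by linarith⟩
  refine ⟨g ((ω₀ + ω₁) / 2), fun ω hωm => ?_⟩
  have hgc : g ω = g ((ω₀ + ω₁) / 2) := by
    rcases lt_trichotomy ω ((ω₀ + ω₁) / 2) with h | h | h
    · exact key ω hωm _ hmid h
    · rw [h]
    · exact (key _ hmid ω hωm h).symm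
  have hz' := hz ω hωm
  rw [← hgc]
  simp only [hg]
  field_simp
  ring
end

section
/- Under the assumptions of the invariant-set construction — z ∈ C³ with z'' = −3z²+Cz+1, (z')² = −2z³+Cz²+2z, z² < 1, C < 0, and (x,y) solving x' = −(zz'/(1−z²))x + (√|C|/(1−z²))y, y' = −(zz'/(1−z²))y − (√|C|/(1−z²))x with x²+y²+z² = 1 — one has the identity (x')² + (y')² + (z')² = 2z − C pointwise. -/
/-- The identity `(x')² + (y')² + (z')² = 2z - C` for the invariant-set construction. -/
theorem stmt13 (a b C : ℝ) (hab : a < b) (hC : C < 0)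
    (x y z x' y' z' z'' : ℝ → ℝ)
    (hzder : ∀ ω ∈ Set.Ioo a b, HasDerivAt z (z' ω) ω)
    (hz'der : ∀ ω ∈ Set.Ioo a b, HasDerivAt z' (z'' ω) ω)
    (hxder : ∀ ω ∈ Set.Ioo a b, HasDerivAt x (x' ω) ω)
    (hyder : ∀ ω ∈ Set.Ioo a b, HasDerivAt y (y' ω) ω)
    (hODE2 : ∀ ω ∈ Set.Ioo a b, z'' ω = -3 * (z ω) ^ 2 + C * z ω + 1)
    (hFI : ∀ ω ∈ Set.Ioo a b,
      (z' ω) ^ 2 = -2 * (z ω) ^ 3 + C * (z ω) ^ 2 + 2 * z ω)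
    (hz1 : ∀ ω ∈ Set.Ioo a b, (z ω) ^ 2 < 1)
    (hxODE : ∀ ω ∈ Set.Ioo a b,
      x' ω = -(z ω * z' ω / (1 - (z ω) ^ 2)) * x ω + Real.sqrt |C| / (1 - (z ω) ^ 2) * y ω)
    (hyODE : ∀ ω ∈ Set.Ioo a b,
      y' ω = -(z ω * z' ω / (1 - (z ω) ^ 2)) * y ω - Real.sqrt |C| / (1 - (z ω) ^ 2) * x ω)
    (hsphere : ∀ ω ∈ Set.Ioo a b, (x ω) ^ 2 + (y ω) ^ 2 + (z ω) ^ 2 = 1) :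
    ∀ ω ∈ Set.Ioo a b,
      (x' ω) ^ 2 + (y' ω) ^ 2 + (z' ω) ^ 2 = 2 * z ω - C := by
  intro ω hω
  have hz1' : (z ω) ^ 2 < 1 := hz1 ω hω
  have hne : 1 - (z ω) ^ 2 ≠ 0 := by nlinarith
  have hs : Real.sqrt |C| ^ 2 = -C := by
    rw [Real.sq_sqrt (abs_nonneg C), abs_of_neg hC]
  rw [hxODE ω hω, hyODE ω hω]
  have hFI' := hFI ω hω
  have hsp := hsphere ω hω
  have hxy : (x ω) ^ 2 + (y ω) ^ 2 = 1 - (z ω) ^ 2 := by linarith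
  field_simp
  linear_combination (((z ω * z' ω) ^ 2 + Real.sqrt |C| ^ 2)) * hxy +
    (1 - z ω ^ 2) * hs + (1 - z ω ^ 2) * hFI'
end

section
/- Under the assumptions of the previous identity (z'' = −3z²+Cz+1, (z')² = −2z³+Cz²+2z, x²+y²+z² = 1, (x')²+(y')²+(z')² = 2z−C, and x,y,z twice differentiable with xx'+yy'+zz' = 0), the functions satisfy the invariant-set equations x z'' − x − x'' z = 0 and y z'' − y − y'' z = 0 pointwise, provided the determinant x y' − y x' = √|C| is nonzero. -/
/-- The invariant-set equations `x z'' - x - x'' z = 0` and `y z'' - y - y'' z = 0`. -/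
theorem stmt14 (a b C : ℝ) (hab : a < b) (hC : C < 0)
    (x y z x' y' z' x'' y'' z'' z''' : ℝ → ℝ)
    (hxder : ∀ ω ∈ Set.Ioo a b, HasDerivAt x (x' ω) ω)
    (hyder : ∀ ω ∈ Set.Ioo a b, HasDerivAt y (y' ω) ω)
    (hzder : ∀ ω ∈ Set.Ioo a b, HasDerivAt z (z' ω) ω)
    (hx'der : ∀ ω ∈ Set.Ioo a b, HasDerivAt x' (x'' ω) ω)
    (hy'der : ∀ ω ∈ Set.Ioo a b, HasDerivAt y' (y'' ω) ω)
    (hz'der : ∀ ω ∈ Set.Ioo a b, HasDerivAt z' (z'' ω) ω)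
    (hz''der : ∀ ω ∈ Set.Ioo a b, HasDerivAt z'' (z''' ω) ω)
    (hODE2 : ∀ ω ∈ Set.Ioo a b, z'' ω = -3 * (z ω) ^ 2 + C * z ω + 1)
    (hFI : ∀ ω ∈ Set.Ioo a b,
      (z' ω) ^ 2 = -2 * (z ω) ^ 3 + C * (z ω) ^ 2 + 2 * z ω)
    (hsphere : ∀ ω ∈ Set.Ioo a b, (x ω) ^ 2 + (y ω) ^ 2 + (z ω) ^ 2 = 1)
    (hspeed : ∀ ω ∈ Set.Ioo a b,
      (x' ω) ^ 2 + (y' ω) ^ 2 + (z' ω) ^ 2 = 2 * z ω - C)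
    (horth : ∀ ω ∈ Set.Ioo a b,
      x ω * x' ω + y ω * y' ω + z ω * z' ω = 0)
    (hWronski : ∀ ω ∈ Set.Ioo a b,
      x ω * y' ω - y ω * x' ω = Real.sqrt |C|)
    (hWne : Real.sqrt |C| ≠ 0) :
    ∀ ω ∈ Set.Ioo a b,
      x ω * z'' ω - x ω - x'' ω * z ω = 0 ∧
      y ω * z'' ω - y ω - y'' ω * z ω = 0 := by
  intro w hw
  have hmem : Set.Ioo a b ∈ nhds w := isOpen_Ioo.mem_nhds hw
  -- derivative of orthogonality relation
  have dorth : HasDerivAt (fun t => x t * x' t + y t * y' t + z t * z' t)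
      ((x' w * x' w + x w * x'' w) + (y' w * y' w + y w * y'' w)
        + (z' w * z' w + z w * z'' w)) w :=
    (((hxder w hw).mul (hx'der w hw)).add ((hyder w hw).mul (hy'der w hw))).add
      ((hzder w hw).mul (hz'der w hw))
  have horthz : (x' w * x' w + x w * x'' w) + (y' w * y' w + y w * y'' w)
      + (z' w * z' w + z w * z'' w) = 0 := by
    have hev : (fun t => x t * x' t + y t * y' t + z t * z' t) =ᶠ[nhds w]
        (fun _ => (0:ℝ)) :=
      Filter.eventuallyEq_of_mem hmem (fun t ht => horth t ht)
    have h0 : HasDerivAt (fun _ : ℝ => (0:ℝ)) 0 w := hasDerivAt_const _ _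
    exact (dorth.congr_of_eventuallyEq hev.symm).unique h0
  -- derivative of speed relation
  have dspeed : HasDerivAt (fun t => x' t ^ 2 + y' t ^ 2 + z' t ^ 2 - 2 * z t)
      ((2 * x' w * x'' w + 2 * y' w * y'' w + 2 * z' w * z'' w) - 2 * z' w) w := by
    have h1 := ((hx'der w hw).pow 2).add ((hy'der w hw).pow 2) |>.add ((hz'der w hw).pow 2)
    have h2 := (hzder w hw).const_mul 2
    have this : HasDerivAt (fun t => x' t ^ 2 + y' t ^ 2 + z' t ^ 2 - 2 * z t) _ w := h1.sub h2
    convert this using 1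
    ring
  have hspeedz : (2 * x' w * x'' w + 2 * y' w * y'' w + 2 * z' w * z'' w)
      - 2 * z' w = 0 := by
    have hev : (fun t => x' t ^ 2 + y' t ^ 2 + z' t ^ 2 - 2 * z t) =ᶠ[nhds w]
        (fun _ => (-C:ℝ)) :=
      Filter.eventuallyEq_of_mem hmem (fun t ht => by
        have := hspeed t ht; linarith)
    have h0 : HasDerivAt (fun _ : ℝ => (-C:ℝ)) 0 w := hasDerivAt_const _ _
    exact (dspeed.congr_of_eventuallyEq hev.symm).unique h0
  set A := x w * z'' w - x w - x'' w * z w with hA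
  set B := y w * z'' w - y w - y'' w * z w with hB
  have key1 : x w * A + y w * B = 0 := by
    have h1 := hsphere w hw
    have h2 := hspeed w hw
    have h3 := hODE2 w hw
    simp only [hA, hB]
    linear_combination (z'' w - 1) * h1 - z w * horthz + z w * h2 + h3
  have key2 : x' w * A + y' w * B = 0 := by
    have h1 := horth w hw
    simp only [hA, hB]
    linear_combination (z'' w - 1) * h1 - (z w / 2) * hspeedz
  have hW : x w * y' w - y w * x' w ≠ 0 := by
    rw [hWronski w hw]; exact hWne
  have hAz : A * (x w * y' w - y w * x' w) = 0 := by
    have : A * (x w * y' w - y w * x' w)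
        = y' w * (x w * A + y w * B) - y w * (x' w * A + y' w * B) := by ring
    rw [this, key1, key2]; ring
  have hBz : B * (x w * y' w - y w * x' w) = 0 := by
    have : B * (x w * y' w - y w * x' w)
        = x w * (x' w * A + y' w * B) - x' w * (x w * A + y w * B) := by ring
    rw [this, key1, key2]; ring
  exact ⟨(mul_eq_zero.mp hAz).resolve_right hW, (mul_eq_zero.mp hBz).resolve_right hW⟩
end
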